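/- arXiv:1908.01749 — 2 statements merged into one kernel-verified Lean document; each statement's English description precedes it below -/
import Mathlib

section
/- Let R be a commutative Noetherian ring whose total ring of fractions Q is semisimple, and M a finite R-module. Then M is torsion free (the map M → M ⊗_R Q is injective) if and only if M is torsionless (the evaluation map M → M** is injective). -/
/-- For a commutative Noetherian ring `R` whose total ring of fractions `Q`
is semisimple and a finite `R`-module `M`, `M` is torsion free (`M → M ⊗_R Q` injective)
iff `M` is torsionless (`M → M**` injective). -/
theorem torsion_free_iff_torsionless
    (R : Type) [CommRing R] [IsNoetherianRing R]
    [IsSemisimpleRing (Localization (nonZeroDivisors R))]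
    (M : Type) [AddCommGroup M] [Module R M] [Module.Finite R M] :
    Function.Injective (LocalizedModule.mkLinearMap (nonZeroDivisors R) M) ↔
      Function.Injective (Module.Dual.eval R M) := by
  classical
  set S := nonZeroDivisors R with hSdef
  let Q := Localization S
  constructor
  · -- torsion free → torsionless
    intro hinj
    rw [injective_iff_map_eq_zero]
    intro m hm
    have hall : ∀ f : Module.Dual R M, f m = 0 := by
      intro f
      have := DFunLike.congr_fun hm f
      simpa [Module.Dual.eval_apply] using this
    -- Set up the embedding of the localized module into a finite free Q-module
    have hfin : Module.Finite Q (LocalizedModule S M) :=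
      Module.Finite.of_isLocalizedModule S (LocalizedModule.mkLinearMap S M)
    obtain ⟨n, π, hπ⟩ := Module.Finite.exists_fin' Q (LocalizedModule S M)
    obtain ⟨W, hW⟩ := exists_isCompl (LinearMap.ker π)
    let e1 : LocalizedModule S M ≃ₗ[Q] ((Fin n → Q) ⧸ LinearMap.ker π) :=
      (π.quotKerEquivOfSurjective hπ).symm
    let e2 : ((Fin n → Q) ⧸ LinearMap.ker π) ≃ₗ[Q] W :=
      Submodule.quotientEquivOfIsCompl _ W hW
    let σ : LocalizedModule S M →ₗ[Q] (Fin n → Q) :=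
      W.subtype ∘ₗ (e1.trans e2).toLinearMap
    have hσ : Function.Injective σ :=
      Subtype.val_injective.comp (e1.trans e2).injective
    let j : M →ₗ[R] (Fin n → Q) :=
      (σ.restrictScalars R) ∘ₗ LocalizedModule.mkLinearMap S M
    have hj : Function.Injective j := hσ.comp hinj
    -- generators of M
    obtain ⟨k, v, hv⟩ := Module.Finite.exists_fin (R := R) (M := M)
    -- clear denominators
    obtain ⟨b, hb⟩ := IsLocalization.exist_integer_multiples_of_finite S
      (fun p : Fin k × Fin n => j (v p.1) p.2)
    let h : M →ₗ[R] (Fin n → Q) := (b : R) • j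
    have hh : Function.Injective h := by
      intro x y hxy
      apply hj
      funext i
      have hbi : IsUnit (algebraMap R Q (b : R)) := IsLocalization.map_units Q b
      have : algebraMap R Q (b : R) * j x i = algebraMap R Q (b : R) * j y i := by
        have := congrFun hxy i
        simpa [h, Algebra.smul_def] using this
      exact hbi.mul_left_cancel this
    -- image of h lands in "integers"
    let N : Submodule R Q := LinearMap.range (Algebra.linearMap R Q)
    have hrange : ∀ x : M, ∀ i : Fin n, h x i ∈ N := by
      have key : LinearMap.range h ≤ Submodule.pi Set.univ (fun _ : Fin n => N) := by
        rw [LinearMap.range_eq_map, ← hv, Submodule.map_span, Submodule.span_le]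
        rintro _ ⟨_, ⟨i, rfl⟩, rfl⟩
        intro idx _
        obtain ⟨r, hr⟩ := hb (i, idx)
        exact ⟨r, by simpa [h] using hr⟩
      intro x i
      exact (Submodule.mem_pi).mp (key (LinearMap.mem_range_self h x)) i (Set.mem_univ i)
    have halg : Function.Injective (Algebra.linearMap R Q) :=
      IsFractionRing.injective R Q
    let eR : R ≃ₗ[R] N := LinearEquiv.ofInjective (Algebra.linearMap R Q) halg
    -- each coordinate gives an R-valued functional
    have hzero : ∀ i : Fin n, h m i = 0 := by
      intro i
      let pr : (Fin n → Q) →ₗ[R] Q := LinearMap.proj i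
      let g : M →ₗ[R] N := (pr ∘ₗ h).codRestrict N (fun x => hrange x i)
      let f : Module.Dual R M := eR.symm.toLinearMap ∘ₗ g
      have hf : f m = 0 := hall f
      have h1 : g m = eR 0 := by
        rw [← hf]
        exact (eR.apply_symm_apply (g m)).symm
      have h2 : ((eR 0 : N) : Q) = 0 := by
        simp [eR, LinearEquiv.ofInjective_apply]
      calc h m i = ((g m : N) : Q) := rfl
        _ = 0 := by rw [h1, h2]
    have : h m = 0 := funext hzero
    exact hh (by simpa using this)
  · -- torsionless → torsion free
    intro hev
    rw [injective_iff_map_eq_zero]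
    intro m hm
    have hm' : (LocalizedModule.mk m 1 : LocalizedModule S M) = LocalizedModule.mk 0 1 := by
      simpa [LocalizedModule.zero_mk] using hm
    rw [LocalizedModule.mk_eq] at hm'
    obtain ⟨u, hu⟩ := hm'
    have hu' : (u : R) • m = 0 := by have h' := hu; simp at h'; exact h'
    apply hev
    rw [map_zero]
    ext f
    have : (u : R) * f m = 0 := by
      have := congrArg f hu'
      simpa [map_smul, smul_eq_mul] using this
    have hf : f m = 0 := u.prop.2 (f m) (by rwa [mul_comm] at this)
    simp [Module.Dual.eval_apply, hf]
end

section
/- Let R be a commutative ring, M an R-module with a free resolution 0 → F₁ →^δ F₀ → M → 0 by finite free modules. If Coker(δ*) = 0, then M is reflexive, i.e., the canonical map M → M** is an isomorphism. -/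
/-!
Surjectivity of `δ*` lifts each coordinate function of `F₁` along `δ`, and these lifts assemble
into a retraction of `δ`. The resolution therefore splits, so `M` is a direct summand of the
finite free module `F₀`, and direct summands of reflexive modules are reflexive.
-/

open Module

theorem LinearMap.exists_retraction_of_surjective_dualMap {R N ι : Type*} [CommRing R]
    [AddCommGroup N] [Module R N] {f : (ι → R) →ₗ[R] N} (hf : Function.Surjective f.dualMap) :
    ∃ l : N →ₗ[R] ι → R, l ∘ₗ f = .id := by
  choose φ hφ using fun i : ι => hf (LinearMap.proj i)
  refine ⟨LinearMap.pi φ, LinearMap.ext fun x => funext fun i => ?_⟩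
  simpa using LinearMap.congr_fun (hφ i) x

theorem reflexive_of_coker_dualMap_eq_zero_general
    (R : Type) [CommRing R]
    (M : Type) [AddCommGroup M] [Module R M]
    (n₁ n₀ : ℕ) (δ : (Fin n₁ → R) →ₗ[R] (Fin n₀ → R)) (π : (Fin n₀ → R) →ₗ[R] M)
    (hex : Function.Exact δ π)
    (hsurj : Function.Surjective π)
    (hcoker : Function.Surjective δ.dualMap) :
    Function.Bijective (Module.Dual.eval R M) := by
  obtain ⟨l, hl⟩ := δ.exists_retraction_of_surjective_dualMap hcoker
  have hsplit := hex.split_tfae'.out 1 0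
  obtain ⟨-, s, hs⟩ := hsplit.mp ⟨hsurj, l, hl⟩
  have : IsReflexive R M := .of_split s π hs
  exact bijective_dual_eval R M

/-- Let `R` be a commutative Noetherian local ring and `M` a module with a
finite free resolution `0 → F₁ →δ F₀ → M → 0`. If `Coker(δ*) = 0` (i.e. `δ*` is
surjective), then `M` is reflexive: the evaluation map `M → M**` is an isomorphism. -/
theorem reflexive_of_coker_dualMap_eq_zero
    (R : Type) [CommRing R] [IsNoetherianRing R] [IsLocalRing R]
    (M : Type) [AddCommGroup M] [Module R M] [Module.Finite R M]
    (n₁ n₀ : ℕ) (δ : (Fin n₁ → R) →ₗ[R] (Fin n₀ → R)) (π : (Fin n₀ → R) →ₗ[R] M)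
    (hinj : Function.Injective δ) (hex : Function.Exact δ π)
    (hsurj : Function.Surjective π)
    (hcoker : Function.Surjective δ.dualMap) :
    Function.Bijective (Module.Dual.eval R M) :=
  reflexive_of_coker_dualMap_eq_zero_general R M n₁ n₀ δ π hex hsurj hcoker
end
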